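/- arXiv:2212.03647 — 9 statements merged into one kernel-verified Lean document; each statement's English description precedes it below -/
import Mathlib

section
/- Let F, G : C → D be finite-coproduct-preserving functors between finitary extensive categories and α : F ⟶ G a natural transformation. Then the naturality square of α at any coproduct summand i : X → Z is a pullback square in D. -/
/-! Both functors send the coproduct `X ⨿ Y` to a coproduct cocone in `D`, and `α` is a map
between these cocones. The cocone of `G` is van Kampen because `D` is extensive, so the map
from a colimit cocone into it is cartesian, which is the pullback property of the square. -/

open CategoryTheory CategoryTheory.Limits

/-- A morphism `i : X ⟶ Z` is a (binary coproduct) summand if there is a morphism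
`j : Y ⟶ Z` such that the cospan `X ⟶ Z ⟵ Y` is a coproduct cocone. -/
def IsSummand {C : Type*} [Category C] {X Z : C} (i : X ⟶ Z) : Prop :=
  ∃ (Y : C) (j : Y ⟶ Z), Nonempty (IsColimit (BinaryCofan.mk i j))

namespace CategoryTheory.Limits

theorem BinaryCofan.isPullback_inl_of_isVanKampen {C : Type*} [Category C]
    {X Y X' Y' : C} {c : BinaryCofan X Y} (hc : IsVanKampenColimit c)
    {c' : BinaryCofan X' Y'} (hc' : IsColimit c') (αX : X' ⟶ X) (αY : Y' ⟶ Y) (f : c'.pt ⟶ c.pt)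
    (hX : αX ≫ c.inl = c'.inl ≫ f) (hY : αY ≫ c.inr = c'.inr ≫ f) :
    IsPullback c'.inl αX f c.inl :=
  ((BinaryCofan.isVanKampen_iff c).mp hc c' αX αY f hX hY |>.mp ⟨hc'⟩).1

end CategoryTheory.Limits

theorem naturality_square_isPullback_of_summand_general {C D : Type*} [Category C] [Category D]
    [FinitaryExtensive D]
    (F G : C ⥤ D) [PreservesFiniteCoproducts F] [PreservesFiniteCoproducts G]
    (α : F ⟶ G) {X Z : C} (i : X ⟶ Z) (hi : IsSummand i) :
    IsPullback (F.map i) (α.app X) (α.app Z) (G.map i) := by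
  obtain ⟨Y, j, ⟨hc⟩⟩ := hi
  have hF : IsColimit (BinaryCofan.mk (F.map i) (F.map j)) :=
    mapIsColimitOfPreservesOfIsColimit F i j hc
  have hG : IsVanKampenColimit (BinaryCofan.mk (G.map i) (G.map j)) :=
    FinitaryExtensive.vanKampen _ (mapIsColimitOfPreservesOfIsColimit G i j hc)
  exact BinaryCofan.isPullback_inl_of_isVanKampen hG hF (α.app X) (α.app Y) (α.app Z)
    (α.naturality i).symm (α.naturality j).symm

/-- For finite-coproduct preserving functors `F G : C ⥤ D` between finitary extensive
categories and a natural transformation `α : F ⟶ G`, the naturality square of `α` at any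
coproduct summand `i : X ⟶ Z` is a pullback square in `D`. -/
theorem naturality_square_isPullback_of_summand {C D : Type*} [Category C] [Category D]
    [FinitaryExtensive C] [FinitaryExtensive D]
    (F G : C ⥤ D) [PreservesFiniteCoproducts F] [PreservesFiniteCoproducts G]
    (α : F ⟶ G) {X Z : C} (i : X ⟶ Z) (hi : IsSummand i) :
    IsPullback (F.map i) (α.app X) (α.app Z) (G.map i) :=
  naturality_square_isPullback_of_summand_general F G α i hi
end

section
/- Let C be a finitary extensive category with finite limits whose full subcategory Dec(C) of decidable objects is reflective, with reflector L : C → Dec(C). Then L preserves finite products if and only if L preserves pullbacks over decidable objects. -/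
/-!
If `S` is decidable, the diagonal `S ⟶ S ⨯ S` has a complement, and the pullback of
`g ⨯ h : X ⨯ Y ⟶ S ⨯ S` along it is `X ×_S Y`. By extensivity, `X ⨯ Y` is then the coproduct
of `X ×_S Y` and the pullback of the complement. The reflector is a left adjoint and decidable
objects are closed under binary coproducts, so `L` maps both decompositions to coproduct
decompositions in `C`; extensivity again makes `L (X ×_S Y)` the pullback of `L (g ⨯ h)` along
`L` of the diagonal, which is the pullback of `L g` and `L h` once `L` preserves products.
Conversely, the terminal object is decidable, hence preserved by `L`, and binary products are
pullbacks over it.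
-/

open CategoryTheory CategoryTheory.Limits

/-- An object `X` is decidable if its diagonal `X ⟶ X ⨯ X` is a coproduct summand. -/
noncomputable def IsDecidableObj {C : Type*} [Category C] [HasBinaryProducts C] (X : C) : Prop :=
  IsSummand (diag X)

section

variable {C : Type*} [Category C]

attribute [local simp] coprod.inl_desc coprod.inr_desc prod.lift_fst prod.lift_snd prod.map_fst
  prod.map_snd

namespace CategoryTheory.Limits

variable {X Y Z W V : C}

/-! The lifts and descents below are typed with the cone point `Z` itself rather than
`(BinaryFan.mk p q).pt`, which `simp` does not identify with `Z`. -/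

namespace BinaryFan.IsLimit

variable {p : Z ⟶ X} {q : Z ⟶ Y} (h : IsLimit (BinaryFan.mk p q))

noncomputable def liftMk (f : W ⟶ X) (g : W ⟶ Y) : W ⟶ Z := lift h f g

@[simp]
theorem liftMk_fst (f : W ⟶ X) (g : W ⟶ Y) : liftMk h f g ≫ p = f := lift_fst h f g

@[simp]
theorem liftMk_snd (f : W ⟶ X) (g : W ⟶ Y) : liftMk h f g ≫ q = g := lift_snd h f g

@[simp]
theorem liftMk_fst_assoc (f : W ⟶ X) (g : W ⟶ Y) (k : X ⟶ V) :
    liftMk h f g ≫ p ≫ k = f ≫ k := by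
  rw [← Category.assoc, liftMk_fst]

@[simp]
theorem liftMk_snd_assoc (f : W ⟶ X) (g : W ⟶ Y) (k : Y ⟶ V) :
    liftMk h f g ≫ q ≫ k = g ≫ k := by
  rw [← Category.assoc, liftMk_snd]

theorem hom_ext_mk (h : IsLimit (BinaryFan.mk p q)) {m m' : W ⟶ Z} (h₁ : m ≫ p = m' ≫ p)
    (h₂ : m ≫ q = m' ≫ q) : m = m' :=
  hom_ext h h₁ h₂

end BinaryFan.IsLimit

namespace BinaryCofan

variable {i : X ⟶ Z} {j : Y ⟶ Z}

noncomputable def isColimitMkOfHomExt (desc : ∀ {W : C}, (X ⟶ W) → (Y ⟶ W) → (Z ⟶ W))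
    (inl_desc : ∀ {W : C} (f : X ⟶ W) (g : Y ⟶ W), i ≫ desc f g = f)
    (inr_desc : ∀ {W : C} (f : X ⟶ W) (g : Y ⟶ W), j ≫ desc f g = g)
    (hom_ext : ∀ {W : C} {m m' : Z ⟶ W}, i ≫ m = i ≫ m' → j ≫ m = j ≫ m' → m = m') :
    IsColimit (BinaryCofan.mk i j) :=
  IsColimit.mk _ desc inl_desc inr_desc fun f g _ h₁ h₂ =>
    hom_ext (h₁.trans (inl_desc f g).symm) (h₂.trans (inr_desc f g).symm)

namespace IsColimit

variable (h : IsColimit (BinaryCofan.mk i j))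

noncomputable def descMk (f : X ⟶ W) (g : Y ⟶ W) : Z ⟶ W := desc h f g

@[simp]
theorem inl_descMk (f : X ⟶ W) (g : Y ⟶ W) : i ≫ descMk h f g = f := inl_desc h f g

@[simp]
theorem inr_descMk (f : X ⟶ W) (g : Y ⟶ W) : j ≫ descMk h f g = g := inr_desc h f g

theorem hom_ext_mk (h : IsColimit (BinaryCofan.mk i j)) {m m' : Z ⟶ W} (h₁ : i ≫ m = i ≫ m')
    (h₂ : j ≫ m = j ≫ m') : m = m' :=
  hom_ext h h₁ h₂

end IsColimit

end BinaryCofan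

end CategoryTheory.Limits

open BinaryFan.IsLimit BinaryCofan.IsColimit

namespace IsSummand

theorem of_isIso [HasInitial C] {X Z : C} (i : X ⟶ Z) [IsIso i] : IsSummand i :=
  ⟨⊥_ C, initial.to Z, ⟨BinaryCofan.isColimitMkOfHomExt (fun f _ => inv i ≫ f) (by simp)
    (fun _ _ => initial.hom_ext _ _) fun h₁ _ => (cancel_epi i).mp h₁⟩⟩

theorem comp [HasBinaryCoproducts C] {A T Z : C} {i : A ⟶ T} {t : T ⟶ Z}
    (hi : IsSummand i) (ht : IsSummand t) : IsSummand (i ≫ t) := by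
  obtain ⟨B, j, ⟨hij⟩⟩ := hi
  obtain ⟨U, u, ⟨htu⟩⟩ := ht
  refine ⟨B ⨿ U, coprod.desc (j ≫ t) u, ⟨BinaryCofan.isColimitMkOfHomExt
    (fun f g => descMk htu (descMk hij f (coprod.inl ≫ g)) (coprod.inr ≫ g))
    (by simp) (fun _ _ => by ext <;> simp) fun h₁ h₂ => ?_⟩⟩
  refine hom_ext_mk htu (hom_ext_mk hij (by simpa using h₁) ?_) ?_
  · simpa using coprod.inl ≫= h₂
  · simpa using coprod.inr ≫= h₂

theorem of_coprod [HasBinaryCoproducts C] {A₁ A₂ W₁ W₂ T Z : C}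
    {i₁ : A₁ ⟶ W₁} {i₂ : A₂ ⟶ W₂} {q₁ : W₁ ⟶ T} {q₂ : W₂ ⟶ T} {u : A₁ ⟶ Z} {v : A₂ ⟶ Z}
    (hZ : IsColimit (BinaryCofan.mk u v)) (hT : IsColimit (BinaryCofan.mk q₁ q₂))
    (h₁ : IsSummand i₁) (h₂ : IsSummand i₂) {d : Z ⟶ T}
    (hd₁ : u ≫ d = i₁ ≫ q₁) (hd₂ : v ≫ d = i₂ ≫ q₂) : IsSummand d := by
  obtain ⟨B₁, j₁, ⟨hc₁⟩⟩ := h₁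
  obtain ⟨B₂, j₂, ⟨hc₂⟩⟩ := h₂
  refine ⟨B₁ ⨿ B₂, coprod.desc (j₁ ≫ q₁) (j₂ ≫ q₂), ⟨BinaryCofan.isColimitMkOfHomExt
    (fun f g => descMk hT (descMk hc₁ (u ≫ f) (coprod.inl ≫ g))
      (descMk hc₂ (v ≫ f) (coprod.inr ≫ g)))
    (fun _ _ => hom_ext_mk hZ ?_ ?_) (fun _ _ => by ext <;> simp) fun e₁ e₂ => ?_⟩⟩
  · rw [← Category.assoc, hd₁]; simp
  · rw [← Category.assoc, hd₂]; simp
  · refine hom_ext_mk hT (hom_ext_mk hc₁ ?_ ?_) (hom_ext_mk hc₂ ?_ ?_)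
    · simpa [← Category.assoc, ← hd₁] using u ≫= e₁
    · simpa using coprod.inl ≫= e₂
    · simpa [← Category.assoc, ← hd₂] using v ≫= e₁
    · simpa using coprod.inr ≫= e₂

end IsSummand

theorem CategoryTheory.IsPullback.of_prod_snd_with_id [HasBinaryProducts C] {A B : C}
    (f : A ⟶ B) (X : C) : IsPullback prod.snd (prod.map (𝟙 X) f) f prod.snd :=
  IsPullback.mk' (by simp)
    (fun _ _ _ h₁ h₂ => prod.hom_ext (by simpa using h₂ =≫ prod.fst) h₁)
    fun _ a b w => ⟨prod.lift (b ≫ prod.fst) a, by simp, by ext <;> simp [w]⟩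

/-- Here `k` plays the role of `g ⨯ h` and `δ` that of the diagonal of `S`. -/
theorem isPullback_diag_iff {T Z X Y S P : C} {pX : T ⟶ X} {pY : T ⟶ Y}
    (hT : IsLimit (BinaryFan.mk pX pY)) {qX qY : Z ⟶ S} (hZ : IsLimit (BinaryFan.mk qX qY))
    {g : X ⟶ S} {h : Y ⟶ S} {k : T ⟶ Z} (hkX : k ≫ qX = pX ≫ g) (hkY : k ≫ qY = pY ≫ h)
    {δ : S ⟶ Z} (hδX : δ ≫ qX = 𝟙 S) (hδY : δ ≫ qY = 𝟙 S) {l : P ⟶ T} :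
    IsPullback l (l ≫ pX ≫ g) k δ ↔ IsPullback (l ≫ pX) (l ≫ pY) g h := by
  constructor
  · intro H
    have hw : l ≫ pY ≫ h = l ≫ pX ≫ g := by simpa [← hkY, hδY] using H.w =≫ qY
    refine IsPullback.mk' (by simpa using hw.symm) (fun _ _ _ h₁ h₂ => H.hom_ext ?_ ?_)
      fun _ a b w => ⟨H.lift (liftMk hT a b) (a ≫ g) ?_, ?_, ?_⟩
    · exact hom_ext_mk hT (by simpa using h₁) (by simpa using h₂)
    · simpa using h₁ =≫ g
    · exact hom_ext_mk hZ (by simp [hkX, hδX]) (by simp [hkY, hδY, w])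
    · simp [← Category.assoc]
    · simp [← Category.assoc]
  · intro H
    have hw : l ≫ k = (l ≫ pX ≫ g) ≫ δ :=
      hom_ext_mk hZ (by simp [hkX, hδX]) (by simpa [hkY, hδY] using H.w.symm)
    refine IsPullback.mk' hw
      (fun _ _ _ h₁ _ => H.hom_ext (by simpa using h₁ =≫ pX) (by simpa using h₁ =≫ pY))
      fun _ a c w => ?_
    have hX : a ≫ pX ≫ g = c := by simpa [hkX, hδX] using w =≫ qX
    have hY : a ≫ pY ≫ h = c := by simpa [hkY, hδY] using w =≫ qY
    have hw' : (a ≫ pX) ≫ g = (a ≫ pY) ≫ h := by simp [hX, hY]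
    exact ⟨H.lift _ _ hw', hom_ext_mk hT (by simp) (by simp),
      by rw [← hX, ← Category.assoc l, ← Category.assoc, H.lift_fst, Category.assoc]⟩

section Extensive

variable [FinitaryExtensive C]

theorem FinitaryExtensive.nonempty_isColimit_iff_isPullback {X Y Z X' Y' Z' : C}
    {i : X ⟶ Z} {j : Y ⟶ Z} (hc : IsColimit (BinaryCofan.mk i j))
    {i' : X' ⟶ Z'} {j' : Y' ⟶ Z'} {a : X' ⟶ X} {b : Y' ⟶ Y} {f : Z' ⟶ Z}
    (ha : a ≫ i = i' ≫ f) (hb : b ≫ j = j' ≫ f) :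
    Nonempty (IsColimit (BinaryCofan.mk i' j')) ↔ IsPullback i' a f i ∧ IsPullback j' b f j :=
  (BinaryCofan.isVanKampen_iff _).mp (FinitaryExtensive.vanKampen _ hc)
    (BinaryCofan.mk i' j') a b f ha hb

theorem CategoryTheory.IsPullback.map_of_isSummand {D : Type*} [Category D] [HasPullbacks C]
    [FinitaryExtensive D] (F : C ⥤ D) [PreservesColimitsOfShape (Discrete WalkingPair) F]
    {A Z P W : C} {i : A ⟶ Z} (hi : IsSummand i) {i' : P ⟶ W} {a : P ⟶ A} {f : W ⟶ Z}
    (H : IsPullback i' a f i) : IsPullback (F.map i') (F.map a) (F.map f) (F.map i) := by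
  obtain ⟨B, j, ⟨hc⟩⟩ := hi
  have hj := (IsPullback.of_hasPullback j f).flip
  obtain ⟨hc'⟩ := (FinitaryExtensive.nonempty_isColimit_iff_isPullback hc H.w.symm
    hj.w.symm).mpr ⟨H, hj⟩
  have hcF := isColimitMapCoconeBinaryCofanEquiv F i j (isColimitOfPreserves F hc)
  have hcF' := isColimitMapCoconeBinaryCofanEquiv F _ _ (isColimitOfPreserves F hc')
  exact ((FinitaryExtensive.nonempty_isColimit_iff_isPullback hcF
    (by rw [← F.map_comp, ← F.map_comp, H.w]) (by rw [← F.map_comp, ← F.map_comp, hj.w])).mp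
    ⟨hcF'⟩).1

variable [HasBinaryProducts C]

theorem CategoryTheory.IsPullback.map_of_isDecidableObj {D : Type*} [Category D]
    [HasPullbacks C] [FinitaryExtensive D] (F : C ⥤ D)
    [PreservesColimitsOfShape (Discrete WalkingPair) F]
    [PreservesLimitsOfShape (Discrete WalkingPair) F] {P X Y S : C} {fst : P ⟶ X}
    {snd : P ⟶ Y} {g : X ⟶ S} {h : Y ⟶ S} (hS : IsDecidableObj S)
    (H : IsPullback fst snd g h) : IsPullback (F.map fst) (F.map snd) (F.map g) (F.map h) := by
  have hdiag := (isPullback_diag_iff (prodIsProd X Y) (prodIsProd S S) (prod.map_fst g h)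
    (prod.map_snd g h) (δ := diag S) (by simp) (by simp) (l := prod.lift fst snd)).mpr
    (by simpa using H)
  have hdiagF := (isPullback_diag_iff
    (isLimitOfHasBinaryProductOfPreservesLimit F X Y)
    (isLimitOfHasBinaryProductOfPreservesLimit F S S)
    (g := F.map g) (h := F.map h) (k := F.map (prod.map g h)) (δ := F.map (diag S))
    (by rw [← F.map_comp, ← F.map_comp, prod.map_fst])
    (by rw [← F.map_comp, ← F.map_comp, prod.map_snd])
    (by rw [← F.map_comp]; simp) (by rw [← F.map_comp]; simp)).mp
    (by simpa using hdiag.map_of_isSummand F hS)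
  simpa [← F.map_comp] using hdiagF

variable {A B Z : C} {u : A ⟶ Z} {v : B ⟶ Z}

theorem nonempty_isColimit_prod_map_id (hc : IsColimit (BinaryCofan.mk u v)) (W : C) :
    Nonempty (IsColimit (BinaryCofan.mk (prod.map u (𝟙 W)) (prod.map v (𝟙 W)))) :=
  (FinitaryExtensive.nonempty_isColimit_iff_isPullback hc (prod.map_fst _ _).symm
    (prod.map_fst _ _).symm).mpr
    ⟨(IsPullback.of_prod_fst_with_id u W).flip, (IsPullback.of_prod_fst_with_id v W).flip⟩

theorem nonempty_isColimit_id_prod_map (hc : IsColimit (BinaryCofan.mk u v)) (W : C) :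
    Nonempty (IsColimit (BinaryCofan.mk (prod.map (𝟙 W) u) (prod.map (𝟙 W) v))) :=
  (FinitaryExtensive.nonempty_isColimit_iff_isPullback hc (prod.map_snd _ _).symm
    (prod.map_snd _ _).symm).mpr
    ⟨(IsPullback.of_prod_snd_with_id u W).flip, (IsPullback.of_prod_snd_with_id v W).flip⟩

/-- The diagonal of `Z = A ⨿ B` restricts over `A` to `diag A ≫ (𝟙 A ⨯ u)`, a summand of the
summand `A ⨯ Z` of `Z ⨯ Z`, and similarly over `B`. -/
theorem isDecidableObj_of_isColimit (hc : IsColimit (BinaryCofan.mk u v))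
    (hA : IsDecidableObj A) (hB : IsDecidableObj B) : IsDecidableObj Z := by
  obtain ⟨hZZ⟩ := nonempty_isColimit_prod_map_id hc Z
  obtain ⟨hAZ⟩ := nonempty_isColimit_id_prod_map hc A
  have hvu : IsColimit (BinaryCofan.mk v u) := BinaryCofan.isColimitFlip hc
  obtain ⟨hBZ⟩ := nonempty_isColimit_id_prod_map hvu B
  exact IsSummand.of_coprod hc hZZ (hA.comp ⟨_, _, ⟨hAZ⟩⟩) (hB.comp ⟨_, _, ⟨hBZ⟩⟩)
    (by ext <;> simp) (by ext <;> simp)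

instance : ObjectProperty.IsClosedUnderBinaryCoproducts (IsDecidableObj (C := C)) where
  colimitsOfShape_le := by
    rintro Z ⟨p⟩
    let hc : IsColimit (BinaryCofan.mk (p.ι.app ⟨.left⟩) (p.ι.app ⟨.right⟩)) :=
      ((IsColimit.precomposeHomEquiv (diagramIsoPair p.diag).symm _).symm
        p.isColimit).ofIsoColimit
        (Cocone.ext (Iso.refl _) (by rintro ⟨⟨⟩⟩ <;> simp <;> exact Category.comp_id _))
    exact isDecidableObj_of_isColimit hc (p.prop_diag_obj _) (p.prop_diag_obj _)

theorem isDecidableObj_terminal [HasTerminal C] : IsDecidableObj (⊤_ C) :=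
  have : IsIso (diag (⊤_ C)) := ⟨prod.fst, by simp, by ext⟩
  IsSummand.of_isIso _

end Extensive

theorem preservesFiniteProducts_of_isPullback_map {D : Type*} [Category D]
    [HasFiniteProducts C] (F : C ⥤ D) (hT : IsTerminal (F.obj (⊤_ C)))
    (H : ∀ A B : C, IsPullback (F.map (prod.fst : A ⨯ B ⟶ A)) (F.map prod.snd)
      (F.map (terminal.from A)) (F.map (terminal.from B))) :
    PreservesFiniteProducts F := by
  have : PreservesLimit (Functor.empty.{0} C) F := preservesLimit_of_preserves_limit_cone
    terminalIsTerminal ((isLimitMapConeEmptyConeEquiv F (⊤_ C)).symm hT)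
  have := preservesLimitsOfShape_pempty_of_preservesTerminal F
  have (A B : C) : PreservesLimit (pair A B) F :=
    preservesLimit_of_preserves_limit_cone (prodIsProd A B) <|
      (isLimitMapConeBinaryFanEquiv F _ _).symm
        (isProductOfIsTerminalIsPullback _ _ _ _ hT (H A B).isLimit)
  have : PreservesLimitsOfShape (Discrete WalkingPair) F :=
    ⟨fun {K} => preservesLimit_of_iso_diagram F (diagramIsoPair K).symm⟩
  exact .of_preserves_binary_and_terminal F

end

/-- For a finitary extensive category `C` with finite limits whose full subcategory of
decidable objects is reflective with reflector `L`, the reflector preserves finite products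
if and only if it preserves pullbacks over decidable objects. -/
theorem reflector_preservesFiniteProducts_iff_preserves_pullbacks_over_decidable
    {C : Type*} [Category C] [FinitaryExtensive C] [HasFiniteLimits C]
    (L : C ⥤ ObjectProperty.FullSubcategory (fun X : C => IsDecidableObj X))
    (adj : L ⊣ ObjectProperty.ι (fun X : C => IsDecidableObj X)) :
    PreservesFiniteProducts L ↔
      (∀ {P X Y S : C} (fst : P ⟶ X) (snd : P ⟶ Y) (g : X ⟶ S) (h : Y ⟶ S),
        IsDecidableObj S → IsPullback fst snd g h →
          IsPullback (L.map fst) (L.map snd) (L.map g) (L.map h)) := by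
  set ι := ObjectProperty.ι (fun X : C => IsDecidableObj X)
  constructor
  · intro _ P X Y S fst snd g h hS hPB
    have := adj.rightAdjoint_preservesLimits
    have := adj.leftAdjoint_preservesColimits
    exact IsPullback.of_map ι (by rw [← L.map_comp, ← L.map_comp, hPB.w])
      (hPB.map_of_isDecidableObj (L ⋙ ι) hS)
  · intro H
    have hT : IsDecidableObj (⊤_ C) := isDecidableObj_terminal
    have hLT : IsTerminal (L.obj (⊤_ C)) :=
      (terminalIsTerminal.isTerminalOfObj ι ⟨⊤_ C, hT⟩).ofIso (asIso (adj.counit.app _)).symm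
    exact preservesFiniteProducts_of_isPullback_map L hLT
      fun A B => H _ _ _ _ hT (IsPullback.of_hasBinaryProduct' A B)
end

section
/- Let C, D be finitary extensive categories with finite products and let R : D → C preserve finite coproducts, have a finite-product-preserving left adjoint L, and be closed under subobjects (for every B in D and monomorphism m : X → R B in C, the unit X → R(L X) is an isomorphism). Then for every decidable object X of C, the unit X → R(L X) is an isomorphism. -/
/-! The diagonal of a decidable `X` is a coproduct injection, and `L ⋙ R` preserves binary
coproducts, so in the extensive category `C` the naturality square of the unit `η` at the
diagonal is a pullback. As `L ⋙ R` also preserves binary products, that square exhibits the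
diagonal of `X` as the kernel pair of `η X`, i.e. `η X` is a mono into `R (L X)`, and closure
under subobjects makes it an isomorphism. -/

open CategoryTheory CategoryTheory.Limits

namespace CategoryTheory

variable {C : Type*} [Category C]

theorem IsSummand.isPullback_naturality {D : Type*} [Category D] [FinitaryExtensive D]
    {G F : C ⥤ D} [PreservesColimitsOfShape (Discrete WalkingPair) G]
    [PreservesColimitsOfShape (Discrete WalkingPair) F] (α : G ⟶ F)
    {X Z : C} {i : X ⟶ Z} (hi : IsSummand i) :
    IsPullback (G.map i) (α.app X) (α.app Z) (F.map i) := by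
  obtain ⟨Y, j, ⟨hc⟩⟩ := hi
  have hvk := FinitaryExtensive.vanKampen _ (isColimitOfPreserves F hc)
  have hw : Functor.whiskerLeft (pair X Y) α ≫ (F.mapCocone (BinaryCofan.mk i j)).ι =
      (G.mapCocone (BinaryCofan.mk i j)).ι ≫ (Functor.const _).map (α.app Z) := by
    ext ⟨⟨⟩⟩ <;> exact (α.naturality _).symm
  exact (hvk _ _ _ hw (NatTrans.Equifibered.of_discrete _)).mp
    ⟨isColimitOfPreserves G hc⟩ ⟨WalkingPair.left⟩

variable [HasBinaryProducts C]

theorem mono_of_isPullback_diag {X Y : C} {f : X ⟶ Y}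
    (h : IsPullback (diag X) f (prod.map f f) (diag Y)) : Mono f where
  right_cancellation a b w := by
    obtain ⟨l, hl, -⟩ := h.exists_lift (prod.lift a b) (a ≫ f) (by ext <;> simp [w])
    have ha := hl =≫ prod.fst
    have hb := hl =≫ prod.snd
    simp only [Category.assoc, diag, prod.lift_fst, prod.lift_snd, Category.comp_id] at ha hb
    rw [← ha, ← hb]

theorem map_diag_comp_prodComparison {D : Type*} [Category D] (F : C ⥤ D) (X : C)
    [HasBinaryProduct (F.obj X) (F.obj X)] :
    F.map (diag X) ≫ prodComparison F X X = diag (F.obj X) := by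
  ext <;> simp only [Category.assoc, prodComparison_fst, prodComparison_snd, ← F.map_comp,
    prod.lift_fst, prod.lift_snd, F.map_id]

theorem NatTrans.mono_app_of_isPullback_naturality_diag {F : C ⥤ C} (η : 𝟭 C ⟶ F) {X : C}
    [IsIso (prodComparison F X X)]
    (h : IsPullback (diag X) (η.app X) (η.app (X ⨯ X)) (F.map (diag X))) : Mono (η.app X) := by
  refine mono_of_isPullback_diag (h.of_iso (Iso.refl _) (Iso.refl _) (Iso.refl _)
    (asIso (prodComparison F X X)) ?_ ?_ ?_ ?_)
  · simp
  · simp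
  · ext <;> simpa using (η.naturality _).symm
  · simp [map_diag_comp_prodComparison]

end CategoryTheory

theorem unit_isIso_of_decidable_general
    {C D : Type*} [Category C] [Category D] [FinitaryExtensive C]
    [HasFiniteProducts C]
    (L : C ⥤ D) (R : D ⥤ C) (adj : L ⊣ R)
    [PreservesFiniteCoproducts R] [PreservesFiniteProducts L]
    (hsub : ∀ (B : D) (X : C) (m : X ⟶ R.obj B), Mono m → IsIso (adj.unit.app X)) :
    ∀ X : C, IsDecidableObj X → IsIso (adj.unit.app X) := by
  have := adj.leftAdjoint_preservesColimits
  have := adj.rightAdjoint_preservesLimits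
  intro X hX
  exact hsub (L.obj X) X (adj.unit.app X)
    (adj.unit.mono_app_of_isPullback_naturality_diag (hX.isPullback_naturality adj.unit))

/-- Let `R : D ⥤ C` be a finite-coproduct preserving functor between finitary extensive
categories with finite products which has a finite-product preserving left adjoint `L` and
is closed under subobjects (the unit is an isomorphism at any subobject of an object of the
form `R B`).  Then the unit is an isomorphism at every decidable object of `C`. -/
theorem unit_isIso_of_decidable
    {C D : Type*} [Category C] [Category D] [FinitaryExtensive C] [FinitaryExtensive D]
    [HasFiniteProducts C] [HasFiniteProducts D]
    (L : C ⥤ D) (R : D ⥤ C) (adj : L ⊣ R)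
    [PreservesFiniteCoproducts R] [PreservesFiniteProducts L]
    (hsub : ∀ (B : D) (X : C) (m : X ⟶ R.obj B), Mono m → IsIso (adj.unit.app X)) :
    ∀ X : C, IsDecidableObj X → IsIso (adj.unit.app X) :=
  unit_isIso_of_decidable_general L R adj hsub
end

section
/- Let C be a finitary extensive category with finite limits in which Dec(C) → C is detached (reflective, closed under finite coproducts and subobjects, with finite-product-preserving reflector). Then Dec(C) is the least detached full subcategory of C: every detached full subcategory S → C contains all decidable objects of C (equivalently, Dec(C) factors through S). -/
open CategoryTheory CategoryTheory.Limits

/-!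
Let `η : 1 ⟶ T` be a natural transformation into an endofunctor preserving binary products and
coproducts (for a reflection, the unit of `R ∘ L`). If `X` is decidable, `X ⨯ X = X ⨿ N` with `N`
the complement of the diagonal. Given `g h : W ⟶ X` with `g ≫ η = h ≫ η`, the map
`⟨g, h⟩ ≫ η` agrees with `g ≫ Δ ≫ η`, so the part of `W` lying over `N` maps into both summands of
the disjoint coproduct `T X ⨿ T N` and is therefore initial. By extensivity, `W` then lies entirely
over the diagonal, i.e. `g = h`. Hence `η_X` is mono, and closure under subobjects makes it an
isomorphism.
-/

section

variable {C : Type*} [Category C]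

lemma FinitaryExtensive.isIso_pullback_fst_of_isInitial [FinitaryExtensive C] [HasPullbacks C]
    {A B Z W : C} {i : A ⟶ Z} {j : B ⟶ Z} (hc : IsColimit (BinaryCofan.mk i j)) (p : W ⟶ Z)
    (hinit : IsInitial (pullback p j)) : IsIso (pullback.fst p i) := by
  have hW : Nonempty (IsColimit (BinaryCofan.mk (pullback.fst p i) (pullback.fst p j))) := by
    rw [(BinaryCofan.isVanKampen_iff _).mp (FinitaryExtensive.vanKampen _ hc)
      (BinaryCofan.mk (pullback.fst p i) (pullback.fst p j))
      (pullback.snd p i) (pullback.snd p j) p pullback.condition.symm pullback.condition.symm]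
    exact ⟨IsPullback.of_hasPullback p i, IsPullback.of_hasPullback p j⟩
  exact (BinaryCofan.isColimit_iff_isIso_inl hinit _).mp hW

lemma eq_of_isInitial_pullback_prodLift [FinitaryExtensive C] [HasPullbacks C]
    [HasBinaryProducts C] {X N W : C} {ν : N ⟶ X ⨯ X} (hc : IsColimit (BinaryCofan.mk (diag X) ν))
    (g h : W ⟶ X) (hinit : IsInitial (pullback (prod.lift g h) ν)) : g = h := by
  have := FinitaryExtensive.isIso_pullback_fst_of_isInitial hc (prod.lift g h) hinit
  have hg : pullback.fst (prod.lift g h) (diag X) ≫ g = pullback.snd _ _ := by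
    simpa only [Category.assoc, prod.lift_fst, Category.comp_id] using
      pullback.condition (f := prod.lift g h) (g := diag X) =≫ prod.fst
  have hh : pullback.fst (prod.lift g h) (diag X) ≫ h = pullback.snd _ _ := by
    simpa only [Category.assoc, prod.lift_snd, Category.comp_id] using
      pullback.condition (f := prod.lift g h) (g := diag X) =≫ prod.snd
  rw [← cancel_epi (pullback.fst (prod.lift g h) (diag X)), hg, hh]

lemma prod_lift_comp_app_eq [HasBinaryProducts C] {T : C ⥤ C}
    (η : 𝟭 C ⟶ T) {X Y W : C} [PreservesLimit (pair X Y) T] {a a' : W ⟶ X} {b b' : W ⟶ Y}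
    (ha : a ≫ η.app X = a' ≫ η.app X) (hb : b ≫ η.app Y = b' ≫ η.app Y) :
    prod.lift a b ≫ η.app (X ⨯ Y) = prod.lift a' b' ≫ η.app (X ⨯ Y) := by
  rw [← cancel_mono (PreservesLimitPair.iso T X Y).hom]
  ext
  · simpa only [PreservesLimitPair.iso_hom, Category.assoc, prodComparison_fst, ← η.naturality,
      Functor.id_map, prod.lift_fst_assoc] using ha
  · simpa only [PreservesLimitPair.iso_hom, Category.assoc, prodComparison_snd, ← η.naturality,
      Functor.id_map, prod.lift_snd_assoc] using hb

lemma IsDecidableObj.mono_app [FinitaryExtensive C] [HasPullbacks C]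
    [HasBinaryProducts C] {T : C ⥤ C} (η : 𝟭 C ⟶ T)
    [PreservesLimitsOfShape (Discrete WalkingPair) T]
    [PreservesColimitsOfShape (Discrete WalkingPair) T] {X : C} (hX : IsDecidableObj X) :
    Mono (η.app X) := by
  obtain ⟨N, ν, ⟨hc⟩⟩ := hX
  refine ⟨fun {W} (g h : W ⟶ X) hgh => eq_of_isInitial_pullback_prodLift hc g h ?_⟩
  have hlift : prod.lift g h ≫ η.app (X ⨯ X) = g ≫ diag X ≫ η.app (X ⨯ X) := by
    rw [← Category.assoc, prod.comp_diag]
    exact prod_lift_comp_app_eq η rfl hgh.symm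
  have hdisj := FinitaryExtensive.isPullback_initial_to_binaryCofan
    (mapIsColimitOfPreservesOfIsColimit T _ _ hc)
  have hw : (pullback.fst (prod.lift g h) ν ≫ g ≫ η.app X) ≫ T.map (diag X) =
      (pullback.snd (prod.lift g h) ν ≫ η.app N) ≫ T.map ν := by
    simp only [Category.assoc, ← η.naturality, Functor.id_map]
    rw [← hlift]
    exact pullback.condition_assoc _
  exact IsInitial.ofStrict (hdisj.lift _ _ hw) initialIsInitial

end

theorem dec_least_detached_general
    {C : Type*} [Category C] [FinitaryExtensive C] [HasFiniteLimits C]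
    {S : Type*} [Category S] (R : S ⥤ C)
    [PreservesFiniteCoproducts R]
    (L : C ⥤ S) (adj : L ⊣ R) [PreservesFiniteProducts L]
    (hsub : ∀ (B : S) (X : C) (m : X ⟶ R.obj B), Mono m → IsIso (adj.unit.app X)) :
    ∀ X : C, IsDecidableObj X → ∃ B : S, Nonempty (X ≅ R.obj B) := by
  intro X hX
  have : PreservesColimitsOfSize L := adj.leftAdjoint_preservesColimits
  have : PreservesLimitsOfSize R := adj.rightAdjoint_preservesLimits
  have := hsub (L.obj X) X _ (hX.mono_app adj.unit)
  exact ⟨L.obj X, ⟨asIso (adj.unit.app X)⟩⟩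

/-- If the subcategory of decidable objects of a finitary extensive category `C` with
finite limits is detached, then it is the least detached subcategory: every detached full
reflective subcategory `R : S ⥤ C` (closed under finite coproducts and subobjects, with a
finite-product preserving reflector `L`) contains every decidable object of `C` up to
isomorphism. -/
theorem dec_least_detached
    {C : Type*} [Category C] [FinitaryExtensive C] [HasFiniteLimits C]
    -- `Dec C ⥤ C` is detached:
    (Ldec : C ⥤ ObjectProperty.FullSubcategory (fun X : C => IsDecidableObj X))
    (adjdec : Ldec ⊣ ObjectProperty.ι (fun X : C => IsDecidableObj X))
    [PreservesFiniteProducts Ldec]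
    (hsubdec : ∀ (B : ObjectProperty.FullSubcategory (fun X : C => IsDecidableObj X)) (X : C)
      (m : X ⟶ (ObjectProperty.ι _).obj B), Mono m → IsIso (adjdec.unit.app X))
    -- an arbitrary detached full reflective subcategory `R : S ⥤ C`:
    {S : Type*} [Category S] (R : S ⥤ C) [R.Full] [R.Faithful]
    [PreservesFiniteCoproducts R]
    (L : C ⥤ S) (adj : L ⊣ R) [PreservesFiniteProducts L]
    (hsub : ∀ (B : S) (X : C) (m : X ⟶ R.obj B), Mono m → IsIso (adj.unit.app X)) :
    ∀ X : C, IsDecidableObj X → ∃ B : S, Nonempty (X ≅ R.obj B) :=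
  dec_least_detached_general R L adj hsub
end

section
/- In the category of finite partially ordered sets (and monotone maps), an object is decidable if and only if it is discrete (its partial order is equality); moreover the full subcategory of discrete finite posets is reflective and the reflector (sending a poset to its set of connected components) preserves finite products. -/
/-!
Let `i : X ⟶ Z` and `j : Y ⟶ Z` be a binary coproduct in finite posets. Mapping `Z` to the chain
`False < True` by `True` on `X` and `False` on `Y` shows that no `i x` lies below a `j y`; and
`i`, `j` are jointly surjective, since the indicators of the up-set and of the strict up-set of a
point `z` are monotone and agree off `z`. If the diagonal of `P` is a summand and `x ≤ y`, then
`(x, x) ≤ (x, y)`, so `(x, y)` is not in the complement and hence lies on the diagonal: `x = y`.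
Conversely, when `P` is discrete every map out of `P × P` is monotone, so the diagonal and its
complement form a coproduct.

The reflector sends `P` to its set of components with the discrete order; maps into a discrete
poset are constant on components, which gives the adjunction. It preserves binary products
because `(x, y) ~ (x', y) ~ (x', y')` whenever `x ~ x'` and `y ~ y'`, so the components of `P × Q`
are the pairs of components.
-/

open CategoryTheory CategoryTheory.Limits

/-- The diagonal of a finite poset `P`, as a morphism into the (componentwise ordered)
binary product `P × P` in `FinPartOrd`. -/
def diagHom (P : FinPartOrd) : P ⟶ FinPartOrd.of (↥P × ↥P) :=
  FinPartOrd.ofHom (OrderHom.id.prod OrderHom.id)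

universe u v

theorem monotone_of_le_imp_eq {α β : Type*} [Preorder α] [Preorder β]
    (h : ∀ x y : α, x ≤ y → x = y) (f : α → β) : Monotone f :=
  fun _ _ hxy => h _ _ hxy ▸ le_rfl

abbrev PartialOrder.discrete (α : Type*) : PartialOrder α where
  le := Eq
  le_refl := Eq.refl
  le_trans _ _ _ := Eq.trans
  le_antisymm _ _ h _ := h

namespace FinPartOrd

def prodFan (X Y : FinPartOrd.{u}) : BinaryFan X Y :=
  BinaryFan.mk (P := of (X × Y)) (ofHom OrderHom.fst) (ofHom OrderHom.snd)

def prodFanIsLimit (X Y : FinPartOrd.{u}) : IsLimit (prodFan X Y) :=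
  BinaryFan.isLimitMk (fun s => ofHom (s.fst.hom.hom.prod s.snd.hom.hom)) (fun _ => rfl)
    (fun _ => rfl) fun _ _ hfst hsnd => by
      ext x
      exacts [ConcreteCategory.congr_hom hfst x, ConcreteCategory.congr_hom hsnd x]

def isTerminalOfUnique (X : FinPartOrd.{u}) [Unique X] : IsTerminal X :=
  IsTerminal.ofUniqueHom (fun Y => ofHom (OrderHom.const Y default)) fun _ _ => by
    ext; exact Unique.eq_default _

instance : HasFiniteProducts FinPartOrd.{u} :=
  have : ∀ {X Y : FinPartOrd.{u}}, HasLimit (pair X Y) := HasLimit.mk ⟨_, prodFanIsLimit _ _⟩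
  have : HasBinaryProducts FinPartOrd.{u} := hasBinaryProducts_of_hasLimit_pair _
  have : HasTerminal FinPartOrd.{u} := (isTerminalOfUnique (of PUnit)).hasTerminal
  hasFiniteProducts_of_has_binary_and_terminal

section Coproducts

variable {X Y Z : FinPartOrd.{u}} {i : X ⟶ Z} {j : Y ⟶ Z}

theorem not_inl_le_inr_of_isColimit (h : IsColimit (BinaryCofan.mk i j)) (x : X) (y : Y) :
    ¬ i x ≤ j y := by
  intro hle
  obtain ⟨χ, hχi, hχj⟩ := BinaryCofan.IsColimit.desc' h
    (ofHom (OrderHom.const X (ULift.up.{u} True))) (ofHom (OrderHom.const Y (ULift.up.{u} False)))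
  have hx : χ (i x) = ULift.up True := ConcreteCategory.congr_hom hχi x
  have hy : χ (j y) = ULift.up False := ConcreteCategory.congr_hom hχj y
  have := (ConcreteCategory.hom χ).monotone hle
  rw [hx, hy] at this
  exact this trivial

theorem mem_range_or_mem_range_of_isColimit (h : IsColimit (BinaryCofan.mk i j)) (z : Z) :
    z ∈ Set.range i ∨ z ∈ Set.range j := by
  by_contra! hz
  let up : Z →o ULift.{u} Prop := ⟨fun w => ULift.up (z ≤ w), fun _ _ hw hzw => hzw.trans hw⟩
  let strictUp : Z →o ULift.{u} Prop := ⟨fun w => ULift.up (z < w), fun _ _ hw hzw => hzw.trans_le hw⟩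
  have hne : ∀ w, w ≠ z → (z ≤ w ↔ z < w) := fun w hw =>
    ⟨fun hle => lt_of_le_of_ne hle hw.symm, le_of_lt⟩
  have hup : ofHom up = ofHom strictUp := by
    refine BinaryCofan.IsColimit.hom_ext h ?_ ?_ <;> ext x
    · exact hne (i x) fun hx => hz.1 ⟨x, hx⟩
    · exact hne (j x) fun hx => hz.2 ⟨x, hx⟩
  have hzz : (z ≤ z) = (z < z) := congrArg ULift.down (ConcreteCategory.congr_hom hup z)
  exact lt_irrefl z (hzz ▸ le_rfl)

end Coproducts

abbrev IsDiscrete : ObjectProperty FinPartOrd.{u} := fun P => ∀ x y : P, x ≤ y → x = y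

theorem isDiscrete_prod {P Q : FinPartOrd.{u}} (hP : IsDiscrete P) (hQ : IsDiscrete Q) :
    IsDiscrete (of (P × Q)) :=
  fun _ _ h => Prod.ext (hP _ _ h.1) (hQ _ _ h.2)

theorem isSummand_diagHom_of_isDiscrete (P : FinPartOrd.{max u v}) (hP : IsDiscrete P) :
    IsSummand (diagHom.{u, v} P) := by
  classical
  refine ⟨of {z : P × P // z.1 ≠ z.2}, ofHom (OrderHom.Subtype.val _), ⟨BinaryCofan.isColimitMk
    (fun s => ofHom ⟨fun z => if h : z.1 = z.2 then s.inl z.1 else s.inr ⟨z, h⟩,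
      monotone_of_le_imp_eq (isDiscrete_prod hP hP) _⟩)
    (fun s => by ext x; exact dif_pos rfl)
    (fun s => by ext z; exact dif_neg z.2)
    (fun s m hl hr => ?_)⟩⟩
  ext ⟨x, y⟩
  by_cases hxy : x = y
  · subst hxy
    exact ((dif_pos rfl).trans (ConcreteCategory.congr_hom hl x).symm).symm
  · exact ((dif_neg hxy).trans (ConcreteCategory.congr_hom hr ⟨(x, y), hxy⟩).symm).symm

theorem isDiscrete_of_isSummand_diagHom (P : FinPartOrd.{max u v})
    (h : IsSummand (diagHom.{u, v} P)) : IsDiscrete P := by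
  obtain ⟨Y, j, ⟨hc⟩⟩ := h
  intro x y hxy
  obtain ⟨p, hp⟩ | ⟨w, hw⟩ := mem_range_or_mem_range_of_isColimit hc (x, y)
  · obtain ⟨rfl, rfl⟩ := Prod.ext_iff.1 hp
    rfl
  · have hle : diagHom.{u, v} P x ≤ j w := hw ▸ ⟨le_rfl, hxy⟩
    exact absurd hle (not_inl_le_inr_of_isColimit hc x w)

theorem isSummand_diagHom_iff (P : FinPartOrd.{max u v}) :
    IsSummand (diagHom.{u, v} P) ↔ IsDiscrete P :=
  ⟨isDiscrete_of_isSummand_diagHom P, isSummand_diagHom_of_isDiscrete P⟩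

noncomputable def components (P : FinPartOrd.{u}) : FinPartOrd.{u} :=
  @of (Quot fun x y : P => x ≤ y) (PartialOrder.discrete _) (Fintype.ofFinite _)

theorem isDiscrete_components (P : FinPartOrd.{u}) : IsDiscrete (components P) :=
  fun _ _ h => h

noncomputable def toComponents (P : FinPartOrd.{u}) : P ⟶ components P :=
  ConcreteCategory.ofHom (⟨Quot.mk _, fun _ _ h => Quot.sound h⟩ : P →o components P)

noncomputable def componentsHomEquiv {P Q : FinPartOrd.{u}} (hQ : IsDiscrete Q) :
    (components P ⟶ Q) ≃ (P ⟶ Q) where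
  toFun g := toComponents P ≫ g
  invFun f := ConcreteCategory.ofHom (⟨Quot.lift f fun _ _ h => hQ _ _ (f.hom.hom.monotone h),
    monotone_of_le_imp_eq (isDiscrete_components P) _⟩ : components P →o Q)
  left_inv g := by ext x; induction x using Quot.ind; rfl
  right_inv _ := rfl

-- Reducible, so that `Adjunction.adjunctionOfEquivLeft` below can read off its data.
noncomputable abbrev componentsReflector : FinPartOrd.{u} ⥤ IsDiscrete.FullSubcategory :=
  Adjunction.leftAdjointOfEquiv (G := IsDiscrete.ι)
    (F_obj := fun P => ⟨components P, isDiscrete_components P⟩)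
    (fun _ Q => (ObjectProperty.fullyFaithfulι _).homEquiv.trans (componentsHomEquiv Q.property))
    fun P _ _ g h => (Category.assoc (toComponents P) h.hom g.hom).symm

noncomputable def componentsAdjunction : componentsReflector.{u} ⊣ IsDiscrete.ι :=
  Adjunction.adjunctionOfEquivLeft _ _

noncomputable def componentsProdEquiv (X Y : FinPartOrd.{u}) :
    components (of (X × Y)) ≃ components X × components Y where
  toFun q := (Quot.map Prod.fst (fun _ _ h => h.1) q, Quot.map Prod.snd (fun _ _ h => h.2) q)
  invFun p := Quot.lift₂ (fun x y => Quot.mk _ (x, y)) (fun _ _ _ h => Quot.sound ⟨le_rfl, h⟩)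
    (fun _ _ _ h => Quot.sound ⟨h, le_rfl⟩) p.1 p.2
  left_inv q := by induction q using Quot.ind; rfl
  right_inv := fun ⟨a, b⟩ => by induction a using Quot.ind; induction b using Quot.ind; rfl

noncomputable def componentsProdIso (X Y : FinPartOrd.{u}) :
    components (of (X × Y)) ≅ of (components X × components Y) :=
  Iso.mk <| (componentsProdEquiv X Y).toOrderIso
    (monotone_of_le_imp_eq (isDiscrete_components _) _)
    (monotone_of_le_imp_eq (isDiscrete_prod (isDiscrete_components X) (isDiscrete_components Y)) _)

noncomputable instance (X Y : FinPartOrd.{u}) :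
    PreservesLimit (pair X Y) (componentsReflector ⋙ IsDiscrete.ι) :=
  preservesLimit_of_preserves_limit_cone (prodFanIsLimit X Y) <|
    (isLimitMapConeBinaryFanEquiv _ _ _).symm <|
      (prodFanIsLimit (components X) (components Y)).ofIsoLimit <| Iso.symm <|
        BinaryFan.ext (componentsProdIso X Y)
          (by ext q; induction q using Quot.ind; rfl) (by ext q; induction q using Quot.ind; rfl)

noncomputable instance :
    PreservesLimitsOfShape (Discrete WalkingPair) (componentsReflector.{u} ⋙ IsDiscrete.ι) :=
  ⟨fun {K} => preservesLimit_of_iso_diagram _ (diagramIsoPair K).symm⟩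

noncomputable instance :
    PreservesLimit (Functor.empty.{0} FinPartOrd.{u}) (componentsReflector ⋙ IsDiscrete.ι) :=
  have : Unique (components (of PUnit.{u + 1})) := inferInstanceAs (Unique (Quot _))
  preservesLimit_of_preserves_limit_cone (isTerminalOfUnique (of PUnit)) <|
    (isLimitMapConeEmptyConeEquiv _ _).symm (isTerminalOfUnique (components (of PUnit)))

instance : PreservesFiniteProducts componentsReflector.{u} :=
  have := preservesLimitsOfShape_pempty_of_preservesTerminal (componentsReflector.{u} ⋙ IsDiscrete.ι)
  have := PreservesFiniteProducts.of_preserves_binary_and_terminal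
    (componentsReflector.{u} ⋙ IsDiscrete.ι)
  ⟨fun _ => preservesLimitsOfShape_of_reflects_of_preserves componentsReflector IsDiscrete.ι⟩

end FinPartOrd

/-- In the category of finite posets: an object is decidable (its diagonal is a coproduct
summand) iff it is discrete; moreover the full subcategory of discrete finite posets is
reflective, with a reflector preserving finite products and computing the set of connected
components (the quotient by the equivalence relation generated by the order). -/
theorem finPartOrd_decidable_iff_discrete_and_components_reflective :
    (∀ P : FinPartOrd, IsSummand (diagHom P) ↔ ∀ x y : P, x ≤ y → x = y) ∧
    ∃ (L : FinPartOrd ⥤ ObjectProperty.FullSubcategory (fun P : FinPartOrd => ∀ x y : P, x ≤ y → x = y))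
      (_ : L ⊣ ObjectProperty.ι (fun P : FinPartOrd => ∀ x y : P, x ≤ y → x = y)),
      PreservesFiniteProducts L ∧
      ∀ P : FinPartOrd, Nonempty (↥((L.obj P).obj) ≃ Quot (fun x y : P => x ≤ y)) :=
  ⟨FinPartOrd.isSummand_diagHom_iff, FinPartOrd.componentsReflector,
    FinPartOrd.componentsAdjunction, inferInstance, fun _ => ⟨Equiv.refl _⟩⟩
end

section
/- Let p : E → S be a hyperconnected essential geometric morphism such that p_! preserves finite products. Then the full subcategory Dec(E) → E of decidable objects of E factors through the full subcategory p* : S → E; that is, every decidable object of E is isomorphic to p* A for some A in S. -/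
open CategoryTheory CategoryTheory.Limits

/-- A subobject classifier. -/
structure Classifier (C : Type*) [Category C] [HasTerminal C] where
  Ω : C
  truth : ⊤_ C ⟶ Ω
  char : ∀ {U X : C} (m : U ⟶ X), Mono m → (X ⟶ Ω)
  isPullback : ∀ {U X : C} (m : U ⟶ X) (hm : Mono m),
    IsPullback m (terminal.from U) (char m hm) truth
  uniq : ∀ {U X : C} (m : U ⟶ X) (hm : Mono m) (c : X ⟶ Ω),
    IsPullback m (terminal.from U) c truth → c = char m hm

/-- An elementary topos: finite limits, cartesian closedness (each functor `X ⨯ -` is a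
left adjoint) and a subobject classifier. -/
def IsElemTopos (C : Type*) [Category C] [HasFiniteLimits C] : Prop :=
  (∀ X : C, (prod.functor.obj X).IsLeftAdjoint) ∧ Nonempty (_root_.Classifier C)

/-!
For decidable `X`, the unit `η : X ⟶ p* p_! X` is monic. Write `X ⨯ X = X ⨿ Y` with `X` embedded
diagonally. Coproducts in a topos are disjoint, so the classifying map of the diagonal is `true` on
`X` and `false` on `Y`; since `p* p_!` preserves this coproduct, that map factors through
`η_{X ⨯ X}`, which `p* p_!` (preserving products) identifies with `η ⨯ η`. Hence two maps that `η`
identifies pair into the diagonal, i.e. they are equal.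

A subobject `U ↪ p* A` lies in the image of `p*`: its classifying map is `ε ∘ p* σ` for the
transpose `σ : A ⟶ p_* Ω`, and as the counit `ε` is monic at `Ω`, `U` is `p*` of the pullback of
`σ` along the transpose of `true`.
-/

section StrictInitial

variable {C : Type*} [Category C] [HasBinaryProducts C] [HasInitial C]

lemma hasStrictInitialObjects_of_isLeftAdjoint_prod
    (h : ∀ X : C, (prod.functor.obj X).IsLeftAdjoint) : HasStrictInitialObjects C :=
  hasStrictInitialObjects_of_initial_is_strict fun A f => by
    have := h A
    have hI : IsInitial (A ⨯ ⊥_ C) := initialIsInitial.isInitialObj (prod.functor.obj A)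
    refine ⟨initial.to A, ?_, initial.hom_ext _ _⟩
    calc f ≫ initial.to A = prod.lift (𝟙 A) f ≫ prod.snd ≫ initial.to A := by
          rw [prod.lift_snd_assoc]
      _ = prod.lift (𝟙 A) f ≫ prod.fst := by rw [hI.hom_ext (prod.snd ≫ initial.to A) prod.fst]
      _ = 𝟙 A := prod.lift_fst _ _

end StrictInitial

namespace Classifier

variable {C : Type*} [Category C] [HasTerminal C] (c : _root_.Classifier C)

lemma comm {U X : C} (m : U ⟶ X) (hm : Mono m) :
    m ≫ c.char m hm = terminal.from U ≫ c.truth :=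
  (c.isPullback m hm).w

lemma eq_of_prod_lift_comp_char_diag [HasBinaryProducts C] {T X : C} {a b : T ⟶ X}
    (h : prod.lift a b ≫ c.char (diag X) inferInstance = terminal.from T ≫ c.truth) : a = b := by
  obtain ⟨s, hs⟩ : ∃ s, s ≫ diag X = prod.lift a b :=
    ⟨(c.isPullback _ _).lift _ _ h, (c.isPullback _ _).lift_fst _ _ _⟩
  have ha := congrArg (· ≫ prod.fst) hs
  have hb := congrArg (· ≫ prod.snd) hs
  simp only [Category.assoc, diag, prod.lift_fst, prod.lift_snd, Category.comp_id] at ha hb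
  rw [← ha, hb]

variable [HasInitial C] [HasStrictInitialObjects C]

noncomputable def falsity : ⊤_ C ⟶ c.Ω := c.char (initial.to _) inferInstance

lemma nonempty_hom_initial_of_truth_eq_falsity {T : C}
    (h : terminal.from T ≫ c.truth = terminal.from T ≫ c.falsity) : Nonempty (T ⟶ ⊥_ C) :=
  ⟨(c.isPullback _ _).lift _ _ h.symm⟩

lemma nonempty_hom_initial_of_isColimit (c : _root_.Classifier C) {T X Y Z : C}
    {i : X ⟶ Z} {j : Y ⟶ Z} (hc : IsColimit (BinaryCofan.mk i j)) {u : T ⟶ X} {v : T ⟶ Y} (h : u ≫ i = v ≫ j) :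
    Nonempty (T ⟶ ⊥_ C) := by
  obtain ⟨d, hi, hj⟩ : ∃ d : Z ⟶ c.Ω,
      i ≫ d = terminal.from X ≫ c.truth ∧ j ≫ d = terminal.from Y ≫ c.falsity :=
    let d := BinaryCofan.IsColimit.desc' hc _ _; ⟨d.1, d.2⟩
  refine c.nonempty_hom_initial_of_truth_eq_falsity ?_
  calc terminal.from T ≫ c.truth = u ≫ i ≫ d := by
        rw [hi, ← Category.assoc, terminal.comp_from]
    _ = v ≫ j ≫ d := by rw [reassoc_of% h]
    _ = terminal.from T ≫ c.falsity := by
        rw [hj, ← Category.assoc, terminal.comp_from]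

lemma eq_char_initial {Z : C} (χ : Z ⟶ c.Ω)
    (h : ∀ {T : C} (u : T ⟶ Z), u ≫ χ = terminal.from T ≫ c.truth → Nonempty (T ⟶ ⊥_ C)) :
    χ = c.char (initial.to Z) inferInstance := by
  refine c.uniq _ _ _ (IsPullback.of_isLimit' ⟨initial.hom_ext _ _⟩ ?_)
  have hs (s : PullbackCone χ c.truth) : s.fst ≫ χ = terminal.from s.pt ≫ c.truth := by
    rw [s.condition, terminal.hom_ext s.snd]
  refine PullbackCone.IsLimit.mk _ (fun s => (h s.fst (hs s)).some)
    (fun s => (IsInitial.ofStrict (h s.fst (hs s)).some initialIsInitial).hom_ext _ _)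
    (fun s => terminal.hom_ext _ _) (fun s l _ _ => initial.strict_hom_ext _ _)

lemma comp_char_eq_falsity {X Y Z : C} {i : X ⟶ Z} {j : Y ⟶ Z}
    (hc : IsColimit (BinaryCofan.mk i j)) (hi : Mono i) :
    j ≫ c.char i hi = terminal.from Y ≫ c.falsity := by
  refine (c.eq_char_initial _ fun u hu => ?_).trans (c.eq_char_initial _ fun u hu => ?_).symm
  · rw [← Category.assoc] at hu
    exact c.nonempty_hom_initial_of_isColimit hc ((c.isPullback i hi).lift_fst _ _ hu)
  · rw [← Category.assoc, terminal.comp_from] at hu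
    exact c.nonempty_hom_initial_of_truth_eq_falsity hu.symm

end Classifier

namespace CategoryTheory.Adjunction

variable {C D : Type*} [Category C] [Category D] {L : C ⥤ D} {R : D ⥤ C} (adj : L ⊣ R)

lemma prod_lift_comp_unit_app_eq [HasBinaryProducts C] {T X Y : C}
    [IsIso (prodComparison (L ⋙ R) X Y)] {a a' : T ⟶ X} {b b' : T ⟶ Y}
    (ha : a ≫ adj.unit.app X = a' ≫ adj.unit.app X)
    (hb : b ≫ adj.unit.app Y = b' ≫ adj.unit.app Y) :
    prod.lift a b ≫ adj.unit.app (X ⨯ Y) = prod.lift a' b' ≫ adj.unit.app (X ⨯ Y) := by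
  rw [← cancel_mono (prodComparison (L ⋙ R) X Y)]
  ext
  · simp only [Category.assoc, prodComparison_fst, Functor.comp_map, unit_naturality,
      prod.lift_fst_assoc, ha]
  · simp only [Category.assoc, prodComparison_snd, Functor.comp_map, unit_naturality,
      prod.lift_snd_assoc, hb]

lemma exists_unit_app_comp_eq_of_isColimit {X Y Z W : C} {i : X ⟶ Z} {j : Y ⟶ Z}
    (hc : IsColimit (BinaryCofan.mk i j)) [PreservesColimit (pair X Y) (L ⋙ R)] {f : Z ⟶ W}
    {g : R.obj (L.obj X) ⟶ W} {h : R.obj (L.obj Y) ⟶ W}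
    (hg : adj.unit.app X ≫ g = i ≫ f) (hh : adj.unit.app Y ≫ h = j ≫ f) :
    ∃ ξ, adj.unit.app Z ≫ ξ = f := by
  obtain ⟨ξ, hξi, hξj⟩ : ∃ ξ : R.obj (L.obj Z) ⟶ W, R.map (L.map i) ≫ ξ = g ∧
      R.map (L.map j) ≫ ξ = h :=
    let ξ := BinaryCofan.IsColimit.desc' (mapIsColimitOfPreservesOfIsColimit (L ⋙ R) i j hc) g h
    ⟨ξ.1, ξ.2⟩
  refine ⟨ξ, BinaryCofan.IsColimit.hom_ext hc ?_ ?_⟩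
  · change i ≫ _ = i ≫ f
    rw [← hg, ← hξi]
    exact (adj.unit_naturality_assoc i ξ).symm
  · change j ≫ _ = j ≫ f
    rw [← hh, ← hξj]
    exact (adj.unit_naturality_assoc j ξ).symm

lemma mono_unit_app_of_isDecidableObj [HasBinaryProducts C] [HasTerminal C] [HasInitial C]
    [HasStrictInitialObjects C] (c : _root_.Classifier C) {X : C} [PreservesLimit (pair X X) (L ⋙ R)] [PreservesColimitsOfShape (Discrete WalkingPair) (L ⋙ R)]
    (hX : IsDecidableObj X) : Mono (adj.unit.app X) := by
  obtain ⟨Y, j, ⟨hc⟩⟩ := hX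
  obtain ⟨ξ, hξ⟩ := adj.exists_unit_app_comp_eq_of_isColimit hc
    (f := c.char (diag X) inferInstance) (g := terminal.from _ ≫ c.truth)
    (h := terminal.from _ ≫ c.falsity)
    (by simp [c.comm]) (by simp [c.comp_char_eq_falsity hc])
  refine ⟨fun {T} (a b : T ⟶ X) hab => c.eq_of_prod_lift_comp_char_diag ?_⟩
  calc prod.lift a b ≫ c.char (diag X) _ = (prod.lift a b ≫ adj.unit.app (X ⨯ X)) ≫ ξ := by
        rw [Category.assoc, hξ]
    _ = (prod.lift a a ≫ adj.unit.app (X ⨯ X)) ≫ ξ :=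
        congrArg (· ≫ ξ) (adj.prod_lift_comp_unit_app_eq rfl hab.symm)
    _ = terminal.from T ≫ c.truth := by
        rw [Category.assoc, hξ, ← prod.comp_diag, Category.assoc, c.comm, ← Category.assoc,
          terminal.comp_from]

lemma exists_iso_obj_of_mono [HasFiniteLimits C] [HasTerminal D] [PreservesFiniteLimits L]
    (c : _root_.Classifier D) [Mono (adj.counit.app c.Ω)] {A : C} {U : D} (m : U ⟶ L.obj A)
    [Mono m] : ∃ B : C, Nonempty (U ≅ L.obj B) := by
  let σ : A ⟶ R.obj c.Ω := adj.homEquiv _ _ (c.char m inferInstance)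
  let τ : ⊤_ C ⟶ R.obj c.Ω := adj.homEquiv _ _ (terminal.from _ ≫ c.truth)
  have hσ : L.map σ ≫ adj.counit.app c.Ω = c.char m inferInstance :=
    (adj.homEquiv_counit _ _ _).symm.trans ((adj.homEquiv _ _).symm_apply_apply _)
  have hτ : L.map τ ≫ adj.counit.app c.Ω = terminal.from _ ≫ c.truth :=
    (adj.homEquiv_counit _ _ _).symm.trans ((adj.homEquiv _ _).symm_apply_apply _)
  have hF : IsPullback (Z := c.Ω) (L.map (pullback.fst σ τ)) (L.map (pullback.snd σ τ))
      (L.map σ ≫ adj.counit.app c.Ω) (L.map τ ≫ adj.counit.app c.Ω) :=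
    IsPullback.of_isLimit (PullbackCone.isLimitOfCompMono _ _ _ _
      ((IsPullback.of_hasPullback σ τ).map L).isLimit)
  rw [hσ, hτ] at hF
  have hpb : IsPullback (L.map (pullback.fst σ τ)) (L.map (pullback.snd σ τ) ≫ terminal.from _)
      (c.char m inferInstance) c.truth :=
    hF.of_iso (Iso.refl _) (Iso.refl _) (PreservesTerminal.iso L) (Iso.refl _)
      (by simp) (terminal.hom_ext _ _) (by simp) (by simp; rfl)
  exact ⟨pullback σ τ, ⟨(c.isPullback m inferInstance).isoIsPullback _ _ hpb⟩⟩

end CategoryTheory.Adjunction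

theorem decidable_in_image_of_inverse_image_general
    {E S : Type*} [Category E] [Category S]
    [HasFiniteLimits E] [HasFiniteColimits E] [HasFiniteLimits S]
    (hE : IsElemTopos E)
    (pStar : S ⥤ E) (pLower : E ⥤ S) (adj : pStar ⊣ pLower) [PreservesFiniteLimits pStar]
    -- hyperconnected: `pStar` fully faithful and the counit of `pStar ⊣ pLower` monic
    (hcounit : ∀ X : E, Mono (adj.counit.app X))
    -- essential with finite-product preserving leftmost adjoint
    (pShriek : E ⥤ S) (adjEss : pShriek ⊣ pStar)
    [PreservesFiniteProducts pShriek] :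
    ∀ X : E, IsDecidableObj X → ∃ A : S, Nonempty (X ≅ pStar.obj A) := by
  intro X hX
  obtain ⟨hcc, ⟨c⟩⟩ := hE
  have := hasStrictInitialObjects_of_isLeftAdjoint_prod hcc
  have := adj.isLeftAdjoint
  have := adjEss.isLeftAdjoint
  have := hcounit c.Ω
  have := adjEss.mono_unit_app_of_isDecidableObj c hX
  exact adj.exists_iso_obj_of_mono c (adjEss.unit.app X)

/-- If `p : E → S` is a hyperconnected essential geometric morphism (inverse image
`pStar` fully faithful with monic counit for `pStar ⊣ pLower`, and a left adjoint
`pShriek`) such that `pShriek` preserves finite products, then every decidable object of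
`E` lies in the image of `pStar` up to isomorphism. -/
theorem decidable_in_image_of_inverse_image
    {E S : Type*} [Category E] [Category S]
    [HasFiniteLimits E] [HasFiniteColimits E] [HasFiniteLimits S] [HasFiniteColimits S]
    (hE : IsElemTopos E) (hS : IsElemTopos S)
    (pStar : S ⥤ E) (pLower : E ⥤ S) (adj : pStar ⊣ pLower) [PreservesFiniteLimits pStar]
    -- hyperconnected: `pStar` fully faithful and the counit of `pStar ⊣ pLower` monic
    [pStar.Full] [pStar.Faithful]
    (hcounit : ∀ X : E, Mono (adj.counit.app X))
    -- essential with finite-product preserving leftmost adjoint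
    (pShriek : E ⥤ S) (adjEss : pShriek ⊣ pStar)
    [PreservesFiniteProducts pShriek] :
    ∀ X : E, IsDecidableObj X → ∃ A : S, Nonempty (X ≅ pStar.obj A) :=
  decidable_in_image_of_inverse_image_general hE pStar pLower adj hcounit pShriek adjEss
end

section
/- Let p : E → S be a pre-cohesive geometric morphism and let φ : p* → p^! be the canonical natural monomorphism defined as the composite p* → p* p_* p^! → p^! (using the inverse of the counit of p_* ⊣ p^! and the counit of p* ⊣ p_*). Then p is a quality type (p_! ≅ p_*, equivalently p_* ⊣ p*) if and only if φ is an isomorphism. -/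
open CategoryTheory CategoryTheory.Limits

/-! Both sides say that `p* ≅ p^!`. Since `p_!` and `p_*` are left adjoints of `p*` and `p^!`,
`p_! ≅ p_*` iff `p* ≅ p^!`. And once `p* ≅ p^!`, `p*` is fully faithful along with `p^!`, so the
counit of `p* ⊣ p_*` is invertible at `p^! X ≅ p* X`, which makes `φ` invertible. -/

namespace CategoryTheory.Adjunction

variable {C D : Type*} [Category C] [Category D]

theorem nonempty_iso_left_iff_right {L₁ L₂ : C ⥤ D} {R₁ R₂ : D ⥤ C}
    (adj₁ : L₁ ⊣ R₁) (adj₂ : L₂ ⊣ R₂) : Nonempty (L₁ ≅ L₂) ↔ Nonempty (R₁ ≅ R₂) :=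
  ⟨fun ⟨e⟩ => ⟨(adj₁.ofNatIsoLeft e).rightAdjointUniq adj₂⟩,
    fun ⟨e⟩ => ⟨adj₁.leftAdjointUniq (adj₂.ofNatIsoRight e.symm)⟩⟩

variable {F H : D ⥤ C} {G : C ⥤ D}

/-- For the string `p* ⊣ p_* ⊣ p^!` this is the map `φ : p* ⟶ p^!`. -/
noncomputable def stringComparison (adj₁ : F ⊣ G) (adj₂ : G ⊣ H) [IsIso adj₂.counit] :
    F ⟶ H :=
  Functor.whiskerRight (inv adj₂.counit) F ≫ Functor.whiskerLeft H adj₁.counit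

@[simp]
theorem stringComparison_app (adj₁ : F ⊣ G) (adj₂ : G ⊣ H) [IsIso adj₂.counit] (X : D) :
    (stringComparison adj₁ adj₂).app X =
      F.map (inv (adj₂.counit.app X)) ≫ adj₁.counit.app (H.obj X) := by
  simp [stringComparison]

theorem isIso_stringComparison_iff [H.Full] [H.Faithful] (adj₁ : F ⊣ G) (adj₂ : G ⊣ H) :
    IsIso (stringComparison adj₁ adj₂) ↔ Nonempty (F ≅ H) := by
  refine ⟨fun _ => ⟨asIso (stringComparison adj₁ adj₂)⟩, fun ⟨e⟩ => ?_⟩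
  have : F.Full := Functor.Full.of_iso e.symm
  have : F.Faithful := Functor.Faithful.of_iso e.symm
  rw [NatTrans.isIso_iff_isIso_app]
  intro X
  have := adj₁.isIso_counit_app_of_iso (e.app X).symm
  rw [stringComparison_app]
  infer_instance

end CategoryTheory.Adjunction

theorem quality_type_iff_phi_isIso_general
    {E S : Type*} [Category E] [Category S]
    (pShriek : E ⥤ S) (pStar : S ⥤ E) (pLower : E ⥤ S) (pUpper : S ⥤ E)
    (adjShriekStar : pShriek ⊣ pStar) (adjStarLow : pStar ⊣ pLower)
    (adjLowUp : pLower ⊣ pUpper)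
    [pUpper.Full] [pUpper.Faithful] :
    Nonempty (pShriek ≅ pLower) ↔
      ∀ X : S, IsIso
        (pStar.map (inv (adjLowUp.counit.app X)) ≫ adjStarLow.counit.app (pUpper.obj X)) := by
  rw [adjShriekStar.nonempty_iso_left_iff_right adjLowUp,
    ← adjStarLow.isIso_stringComparison_iff adjLowUp, NatTrans.isIso_iff_isIso_app]
  simp only [Adjunction.stringComparison_app]

/-- For a pre-cohesive geometric morphism `p : E → S` (adjoint string
`pShriek ⊣ pStar ⊣ pLower ⊣ pUpper` with `pStar`, `pUpper` fully faithful, the counit of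
`pStar ⊣ pLower` monic, and `pShriek` preserving finite products), the canonical natural
monomorphism `φ : pStar ⟶ pUpper`, whose component at `X` is
`pStar.map (inv (adjLowUp.counit.app X)) ≫ adjStarLow.counit.app (pUpper.obj X)`
(using the inverse of the counit of `pLower ⊣ pUpper` and the counit of `pStar ⊣ pLower`),
is an isomorphism if and only if `p` is a quality type (`pShriek ≅ pLower`). -/
theorem quality_type_iff_phi_isIso
    {E S : Type*} [Category E] [Category S]
    [HasFiniteLimits E] [HasFiniteColimits E] [HasFiniteLimits S] [HasFiniteColimits S]
    (hE : IsElemTopos E) (hS : IsElemTopos S)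
    (pShriek : E ⥤ S) (pStar : S ⥤ E) (pLower : E ⥤ S) (pUpper : S ⥤ E)
    (adjShriekStar : pShriek ⊣ pStar) (adjStarLow : pStar ⊣ pLower)
    (adjLowUp : pLower ⊣ pUpper)
    [PreservesFiniteLimits pStar]
    [pStar.Full] [pStar.Faithful] [pUpper.Full] [pUpper.Faithful]
    (hcounit : ∀ X : E, Mono (adjStarLow.counit.app X))
    [PreservesFiniteProducts pShriek] :
    Nonempty (pShriek ≅ pLower) ↔
      ∀ X : S, IsIso
        (pStar.map (inv (adjLowUp.counit.app X)) ≫ adjStarLow.counit.app (pUpper.obj X)) :=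
  quality_type_iff_phi_isIso_general pShriek pStar pLower pUpper adjShriekStar adjStarLow adjLowUp
end

section
/- Let p : E → S be a pre-cohesive geometric morphism. If p has the Connected Interval property (p_!(p^! 2) ≅ 1, where 2 = 1 + 1), then for every object B of S the sliced local essential geometric morphism p/B : E/p*B → S/B also has the Connected Interval property; in particular (p/B)_! ((p/B)^! 2) ≅ 1 in S/B. -/
open CategoryTheory CategoryTheory.Limits

/-!
Since `p_!` preserves binary products, `p_!(p^! 2 × p^* B) ≅ p_!(p^! 2) × p_!(p^* B) ≅ 1 × B`,
so `p_!` sends the projection `p^! 2 × p^* B → p^* B` to an isomorphism. The counit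
`p_! p^* B → B` is an isomorphism because `p^*` is fully faithful, hence the structure map of
`(p/B)_!((p/B)^! 2)` is an isomorphism, i.e. this object is terminal in `S/B`.
-/

namespace CategoryTheory.Limits

variable {C D : Type*} [Category C] [Category D]

theorem isIso_prod_snd_of_isTerminal {T Y : C} [HasBinaryProduct T Y] (hT : IsTerminal T) :
    IsIso (prod.snd : T ⨯ Y ⟶ Y) :=
  (BinaryFan.isLimit_iff_isIso_snd hT _).mp ⟨limit.isLimit _⟩

theorem isIso_map_prod_snd_of_isTerminal_obj (F : C ⥤ D) {X Y : C} [HasBinaryProduct X Y]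
    [HasBinaryProduct (F.obj X) (F.obj Y)] [PreservesLimit (pair X Y) F]
    (hX : IsTerminal (F.obj X)) : IsIso (F.map (prod.snd : X ⨯ Y ⟶ Y)) := by
  have : IsIso (prod.snd : F.obj X ⨯ F.obj Y ⟶ F.obj Y) := isIso_prod_snd_of_isTerminal hX
  rw [← prodComparison_snd]
  infer_instance

end CategoryTheory.Limits

theorem connected_interval_stable_under_slicing_general
    {E S : Type*} [Category E] [Category S]
    [HasFiniteLimits E] [HasFiniteLimits S] [HasFiniteColimits S]
    (pShriek : E ⥤ S) (pStar : S ⥤ E) (pUpper : S ⥤ E)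
    (adjShriekStar : pShriek ⊣ pStar)
    [pStar.Full] [pStar.Faithful]
    [PreservesFiniteProducts pShriek]
    -- the Connected Interval property for `p`
    (hCI : Nonempty (pShriek.obj (pUpper.obj ((⊤_ S) ⨿ (⊤_ S))) ≅ ⊤_ S)) :
    -- the Connected Interval property for each slice `p/B`
    ∀ B : S,
      Nonempty (Over.mk
          (pShriek.map
              (prod.snd : pUpper.obj ((⊤_ S) ⨿ (⊤_ S)) ⨯ pStar.obj B ⟶ pStar.obj B) ≫
            adjShriekStar.counit.app B) ≅
        Over.mk (𝟙 B)) := by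
  intro B
  obtain ⟨hI⟩ := hCI
  have := isIso_map_prod_snd_of_isTerminal_obj pShriek (Y := pStar.obj B)
    (terminalIsTerminal.ofIso hI.symm)
  exact ⟨Over.isoMk (asIso (pShriek.map prod.snd ≫ adjShriekStar.counit.app B)) (by simp)⟩

/-- If a pre-cohesive geometric morphism `p : E → S` has the Connected Interval property
(`pShriek (pUpper 2) ≅ 1` where `2 = 1 + 1`), then for every `B : S` the sliced geometric
morphism `p/B` also has the Connected Interval property: using the identifications
`(p/B)^! 2 ≅ (π₁ : pUpper 2 ⨯ pStar B ⟶ pStar B)` and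
`(p/B)_! (f : X ⟶ pStar B) ≅ (pShriek X ⟶ pShriek (pStar B) ⟶ B)`, the object
`(p/B)_! ((p/B)^! 2)` of `S/B` is isomorphic to the terminal object `𝟙 B` of `S/B`. -/
theorem connected_interval_stable_under_slicing
    {E S : Type*} [Category E] [Category S]
    [HasFiniteLimits E] [HasFiniteColimits E] [HasFiniteLimits S] [HasFiniteColimits S]
    (hE : IsElemTopos E) (hS : IsElemTopos S)
    (pShriek : E ⥤ S) (pStar : S ⥤ E) (pLower : E ⥤ S) (pUpper : S ⥤ E)
    (adjShriekStar : pShriek ⊣ pStar) (adjStarLow : pStar ⊣ pLower)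
    (adjLowUp : pLower ⊣ pUpper)
    [PreservesFiniteLimits pStar]
    [pStar.Full] [pStar.Faithful] [pUpper.Full] [pUpper.Faithful]
    (hcounit : ∀ X : E, Mono (adjStarLow.counit.app X))
    [PreservesFiniteProducts pShriek]
    -- the Connected Interval property for `p`
    (hCI : Nonempty (pShriek.obj (pUpper.obj ((⊤_ S) ⨿ (⊤_ S))) ≅ ⊤_ S)) :
    -- the Connected Interval property for each slice `p/B`
    ∀ B : S,
      Nonempty (Over.mk
          (pShriek.map
              (prod.snd : pUpper.obj ((⊤_ S) ⨿ (⊤_ S)) ⨯ pStar.obj B ⟶ pStar.obj B) ≫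
            adjShriekStar.counit.app B) ≅
        Over.mk (𝟙 B)) :=
  connected_interval_stable_under_slicing_general pShriek pStar pUpper adjShriekStar hCI
end

section
/- Let L ⊣ R : B → A be an adjunction between small categories with R fully faithful, let J be a Grothendieck topology on B, and let f : Psh(A) → Psh(B) be the induced essential geometric morphism (f_! the left Kan extension of L, f* = precomposition with L, f_* = precomposition with R up to the adjunction). If the canonical map f_* X → f_! X is J-locally surjective for every presheaf X on A, then for every object C of A the natural transformation A(R-, ν_C) : A(R-, C) → A(R-, R(L C)) in Psh(B) is J-locally surjective, where ν is the unit of L ⊣ R; and conversely, if A(R-, ν_C) is J-locally surjective for every C, then f_* X → f_! X is J-locally surjective for every X. -/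
/-!
Every element of `(f_! X)(b)` has the form `x ⊗ g` with `x ∈ X(c)` and `g : b ⟶ L c`, and
`θ` sends `h ∈ X(R b')` to `h ⊗ ξ⁻¹`. Since `R` is faithful and `R(ξ⁻¹ ≫ L h) = h ≫ ν_c`, an
equation `h ≫ ν_c = R(f ≫ g)` in `A` is the same as `ξ⁻¹ ≫ L h = f ≫ g` in `B`, which makes
`(X.map h) ⊗ ξ⁻¹ = x ⊗ (f ≫ g)`. So every local lift of `R g` along `A(R-, ν_c)` gives a local
lift of `x ⊗ g` along `θ`. Conversely, for `X = A(-, C)` the map `f_! X ⟶ B(-, L C)`,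
`x ⊗ g ↦ g ≫ L x`, turns local lifts of `𝟙 ⊗ g` along `θ` back into local lifts of `R g`.
-/

open CategoryTheory CategoryTheory.Limits Opposite

universe u

noncomputable section

variable {A B : Type u} [SmallCategory A] [SmallCategory B]

/-- Given a reflection `L ⊣ R : B → A` (with `R` fully faithful), the induced essential
geometric morphism `f : Psh(A) → Psh(B)` has `f_* X = R.op ⋙ X` and `f_! X` the left Kan
extension of `X` along `L.op`.  This is the canonical natural transformation
`θ : f_* X ⟶ f_! X`; its component at `b` sends `x ∈ X (R b)` to `x ⊗ ξ_b⁻¹`, where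
`ξ` is the (invertible) counit of `L ⊣ R`. -/
def theta (L : A ⥤ B) (R : B ⥤ A) (adj : L ⊣ R) [R.Full] [R.Faithful]
    (X : Aᵒᵖ ⥤ Type u) : (R.op ⋙ X) ⟶ L.op.lan.obj X :=
  Functor.whiskerLeft R.op (L.op.lanUnit.app X) ≫
    Functor.whiskerRight (NatTrans.op (inv adj.counit)) (L.op.lan.obj X)

section LeftKanExtension

variable (L : A ⥤ B) (X : Aᵒᵖ ⥤ Type u)

/-- The element `x ⊗ g` of `(L.op.lan.obj X)(b)`. -/
def lanElem {b : B} {c : A} (g : b ⟶ L.obj c) (x : X.obj (op c)) :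
    (L.op.lan.obj X).obj (op b) :=
  (L.op.lan.obj X).map g.op ((L.op.lanUnit.app X).app (op c) x)

lemma exists_lanElem_eq {b : B} (y : (L.op.lan.obj X).obj (op b)) :
    ∃ (c : A) (g : b ⟶ L.obj c) (x : X.obj (op c)), lanElem L X g x = y := by
  let e := L.op.leftKanExtensionObjIsoColimit X (op b)
  obtain ⟨j, x, hx⟩ := Types.jointly_surjective' (e.hom y)
  refine ⟨j.left.unop, j.hom.unop, x, ?_⟩
  have hι : e.inv (colimit.ι (CostructuredArrow.proj L.op (op b) ⋙ X) j x) =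
      lanElem L X j.hom.unop x :=
    types_congr_hom (L.op.ι_leftKanExtensionObjIsoColimit_inv X (op b) j) x
  rw [← hι, hx]
  exact types_congr_hom e.hom_inv_id y

lemma lan_map_lanElem {b b' : B} {c : A} (f : b' ⟶ b) (g : b ⟶ L.obj c) (x : X.obj (op c)) :
    (L.op.lan.obj X).map f.op (lanElem L X g x) = lanElem L X (f ≫ g) x := by
  simp only [lanElem, op_comp, Functor.map_comp_apply]

lemma lanElem_comp_map {b : B} {c c' : A} (h : c' ⟶ c) (g : b ⟶ L.obj c') (x : X.obj (op c)) :
    lanElem L X (g ≫ L.map h) x = lanElem L X g (X.map h.op x) := by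
  simp only [lanElem, op_comp, Functor.map_comp_apply]
  congr 1
  exact ((L.op.lanUnit.app X).naturality_apply h.op x).symm

/-- The map `(f_! A(-, C))(b) ⟶ B(b, L C)`, `x ⊗ g ↦ g ≫ L x`. -/
def lanYonedaDesc (C : A) : L.op.lan.obj (yoneda.obj C) ⟶ yoneda.obj (L.obj C) :=
  Functor.descOfIsLeftKanExtension _ (L.op.lanUnit.app _) _ (yonedaMap L C)

lemma lanYonedaDesc_app_lanElem (C : A) {b : B} {c : A} (g : b ⟶ L.obj c) (x : c ⟶ C) :
    (lanYonedaDesc L C).app (op b) (lanElem L (yoneda.obj C) g x) = g ≫ L.map x := by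
  rw [lanElem, (lanYonedaDesc L C).naturality_apply]
  have hfac : (lanYonedaDesc L C).app (op (L.obj c))
      ((L.op.lanUnit.app (yoneda.obj C)).app (op c) x) = L.map x := types_congr_hom
    (Functor.descOfIsLeftKanExtension_fac_app _ (L.op.lanUnit.app _) _ (yonedaMap L C) (op c)) x
  rw [hfac]
  rfl

end LeftKanExtension

section Reflection

variable {L : A ⥤ B} {R : B ⥤ A} (adj : L ⊣ R) [R.Full] [R.Faithful]

lemma theta_app_apply (X : Aᵒᵖ ⥤ Type u) (b : B) (x : X.obj (op (R.obj b))) :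
    (theta L R adj X).app (op b) x = lanElem L X ((inv adj.counit).app b) x := rfl

lemma map_inv_counit_app_comp_map {b : B} {c : A} (h : R.obj b ⟶ c) :
    R.map ((inv adj.counit).app b ≫ L.map h) = h ≫ adj.unit.app c := by
  simp only [NatIso.isIso_inv_app, R.map_comp, Functor.map_inv, Adjunction.inv_counit_map]
  exact (adj.unit.naturality h).symm

lemma inv_counit_app_comp_map_eq_iff {b : B} {c : A} (h : R.obj b ⟶ c) (g : b ⟶ L.obj c) :
    (inv adj.counit).app b ≫ L.map h = g ↔ h ≫ adj.unit.app c = R.map g := by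
  rw [← R.map_injective.eq_iff, map_inv_counit_app_comp_map]

lemma theta_locallySurjective_of_unit_locallySurjective (J : GrothendieckTopology B)
    (H : ∀ C : A, Presheaf.IsLocallySurjective J
      (Functor.whiskerLeft R.op (yoneda.map (adj.unit.app C))))
    (X : Aᵒᵖ ⥤ Type u) : Presheaf.IsLocallySurjective J (theta L R adj X) := by
  refine ⟨fun {b} y => ?_⟩
  obtain ⟨c, g, x, rfl⟩ := exists_lanElem_eq L X y
  refine J.superset_covering ?_ (Presheaf.imageSieve_mem J
    (Functor.whiskerLeft R.op (yoneda.map (adj.unit.app c))) (U := op b) (R.map g))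
  rintro b' f ⟨h, hh : h ≫ adj.unit.app c = R.map f ≫ R.map g⟩
  refine ⟨X.map h.op x, ?_⟩
  rw [theta_app_apply, lan_map_lanElem, ← lanElem_comp_map,
    inv_counit_app_comp_map_eq_iff adj h (f ≫ g) |>.mpr (by rw [R.map_comp]; exact hh)]

lemma unit_locallySurjective_of_theta_locallySurjective (J : GrothendieckTopology B)
    (H : ∀ X : Aᵒᵖ ⥤ Type u, Presheaf.IsLocallySurjective J (theta L R adj X)) (C : A) :
    Presheaf.IsLocallySurjective J (Functor.whiskerLeft R.op (yoneda.map (adj.unit.app C))) := by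
  refine ⟨fun {b} t => ?_⟩
  obtain ⟨g, rfl⟩ := R.map_surjective t
  refine J.superset_covering ?_
    (Presheaf.imageSieve_mem J (theta L R adj (yoneda.obj C)) (U := op b)
      (lanElem L (yoneda.obj C) g (𝟙 C)))
  rintro b' f ⟨h, hh⟩
  refine ⟨h, ?_⟩
  rw [lan_map_lanElem] at hh
  have hB := congr_arg ((lanYonedaDesc L C).app (op b')) hh
  rw [theta_app_apply, lanYonedaDesc_app_lanElem, lanYonedaDesc_app_lanElem, L.map_id,
    Category.comp_id, inv_counit_app_comp_map_eq_iff] at hB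
  exact hB.trans (R.map_comp f g)

end Reflection

/-- The canonical map `f_* X ⟶ f_! X` is `J`-locally surjective for every presheaf `X` on
`A` if and only if `A(R-, ν_C) : A(R-, C) ⟶ A(R-, R(L C))` is `J`-locally surjective for
every object `C` of `A`, where `ν` is the unit of `L ⊣ R`. -/
theorem theta_locallySurjective_iff_unit_locallySurjective
    (L : A ⥤ B) (R : B ⥤ A) (adj : L ⊣ R) [R.Full] [R.Faithful]
    (J : GrothendieckTopology B) :
    (∀ X : Aᵒᵖ ⥤ Type u, Presheaf.IsLocallySurjective J (theta L R adj X)) ↔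
      (∀ C : A, Presheaf.IsLocallySurjective J
        (Functor.whiskerLeft R.op (yoneda.map (adj.unit.app C)))) :=
  ⟨unit_locallySurjective_of_theta_locallySurjective adj J,
    theta_locallySurjective_of_unit_locallySurjective adj J⟩

end
end
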